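/- arXiv:2101.04738 — 4 statements merged into one kernel-verified Lean document; each statement's English description precedes it below -/
import Mathlib

section
/- Under Assumption 2, for any horizons N ≥ 0 and M ≥ 0 and any state x ∈ ℝⁿ with ℓ_min(x) ≤ ε, the MPC optimization problem is feasible (V_{N,M}(x) < +∞) and the value function satisfies V_{N,M}(x) ≤ γ_{N+M} · ℓ_min(x), where γ_k := C(1−ρ^k)/(1−ρ). -/
open Finset Filter
open scoped ENNReal

noncomputable section

open scoped Classical

/-- State/input spaces are Euclidean spaces. -/
abbrev Vec (n : ℕ) := EuclideanSpace ℝ (Fin n)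

/-- Open-loop state trajectory: `x(0) = x`, `x(k+1) = f(x(k), u(k))`. -/
def traj {n m : ℕ} (f : Vec n → Vec m → Vec n) (x : Vec n) (u : ℕ → Vec m) : ℕ → Vec n
  | 0 => x
  | k + 1 => f (traj f x u k) (u k)

/-- Closed-loop state trajectory under the feedback `κ` (the map `φ_x(·, x)`). -/
def phiX {n m : ℕ} (f : Vec n → Vec m → Vec n) (κ : Vec n → Vec m) (x : Vec n) : ℕ → Vec n
  | 0 => x
  | k + 1 => f (phiX f κ x k) (κ (phiX f κ x k))

/-- `ℓ_min(x) := inf_{u ∈ U} ℓ(x, u)`. -/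
def lmin {n m : ℕ} (ℓ : Vec n → Vec m → ℝ) (Uset : Set (Vec m)) (x : Vec n) : ℝ :=
  sInf ((fun u => ℓ x u) '' Uset)

/-- Finite-tail cost `V_{f,M}(x)`: sum of the stage cost along the κ-closed loop if the
constraints are satisfied along the tail, and `+∞` otherwise (for `M = 0` it equals `0`). -/
def Vtail {n m : ℕ} (f : Vec n → Vec m → Vec n) (κ : Vec n → Vec m)
    (ℓ : Vec n → Vec m → ℝ) (Z : Set (Vec n × Vec m)) (M : ℕ) (x : Vec n) : ℝ≥0∞ :=
  if ∀ k < M, (phiX f κ x k, κ (phiX f κ x k)) ∈ Z then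
    ENNReal.ofReal (∑ k ∈ Finset.range M, ℓ (phiX f κ x k) (κ (phiX f κ x k)))
  else ⊤

/-- Feasibility of the input sequence `u` over horizon `N` from state `x`. -/
def Feasible {n m : ℕ} (f : Vec n → Vec m → Vec n) (Z : Set (Vec n × Vec m))
    (Uset : Set (Vec m)) (N : ℕ) (x : Vec n) (u : ℕ → Vec m) : Prop :=
  ∀ k < N, u k ∈ Uset ∧ (traj f x u k, u k) ∈ Z

/-- MPC open-loop cost `J_{N,M}` of the input sequence `u` from state `x`. -/
def Jcost {n m : ℕ} (f : Vec n → Vec m → Vec n) (κ : Vec n → Vec m)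
    (ℓ : Vec n → Vec m → ℝ) (Z : Set (Vec n × Vec m)) (N M : ℕ) (x : Vec n)
    (u : ℕ → Vec m) : ℝ≥0∞ :=
  ENNReal.ofReal (∑ k ∈ Finset.range N, ℓ (traj f x u k) (u k)) +
    Vtail f κ ℓ Z M (traj f x u N)

/-- MPC value function `V_{N,M}(x)` (equal to `+∞` if the problem is infeasible). -/
def Vmpc {n m : ℕ} (f : Vec n → Vec m → Vec n) (κ : Vec n → Vec m)
    (ℓ : Vec n → Vec m → ℝ) (Z : Set (Vec n × Vec m)) (Uset : Set (Vec m))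
    (N M : ℕ) (x : Vec n) : ℝ≥0∞ :=
  ⨅ (u : ℕ → Vec m) (_ : Feasible f Z Uset N x u), Jcost f κ ℓ Z N M x u

/-- `u` is a minimizing (optimal) input sequence for `V_{N,M}(x)`. -/
def IsMinimizer {n m : ℕ} (f : Vec n → Vec m → Vec n) (κ : Vec n → Vec m)
    (ℓ : Vec n → Vec m → ℝ) (Z : Set (Vec n × Vec m)) (Uset : Set (Vec m))
    (N M : ℕ) (x : Vec n) (u : ℕ → Vec m) : Prop :=
  Feasible f Z Uset N x u ∧ Vmpc f κ ℓ Z Uset N M x = Jcost f κ ℓ Z N M x u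

/-- Infinite-horizon optimal cost `V_{∞,0}(x)`. -/
def Vinf {n m : ℕ} (f : Vec n → Vec m → Vec n) (ℓ : Vec n → Vec m → ℝ)
    (Z : Set (Vec n × Vec m)) (Uset : Set (Vec m)) (x : Vec n) : ℝ≥0∞ :=
  ⨅ (u : ℕ → Vec m) (_ : ∀ k, u k ∈ Uset ∧ (traj f x u k, u k) ∈ Z),
    ∑' k : ℕ, ENNReal.ofReal (ℓ (traj f x u k) (u k))

/-- Assumption 2 (locally stabilizing controller): exponential decay of the stage
cost along the κ-closed loop and constraint satisfaction, locally (`ℓ_min(x) ≤ ε`). -/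
def Assumption2 {n m : ℕ} (f : Vec n → Vec m → Vec n) (κ : Vec n → Vec m)
    (ℓ : Vec n → Vec m → ℝ) (Z : Set (Vec n × Vec m)) (Uset : Set (Vec m))
    (ρ C ε : ℝ) : Prop :=
  ρ ∈ Set.Ico (0 : ℝ) 1 ∧ 1 ≤ C ∧ 0 < ε ∧
    ∀ x : Vec n, lmin ℓ Uset x ≤ ε → ∀ k : ℕ,
      ℓ (phiX f κ x k) (κ (phiX f κ x k)) ≤ C * ρ ^ k * lmin ℓ Uset x ∧
      (phiX f κ x k, κ (phiX f κ x k)) ∈ Z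

/-- A class-`K∞` function: continuous, strictly increasing and unbounded on `[0,∞)`
with `α(0) = 0`. -/
def IsKInfty (α : ℝ → ℝ) : Prop :=
  ContinuousOn α (Set.Ici 0) ∧ StrictMonoOn α (Set.Ici 0) ∧ α 0 = 0 ∧
    Tendsto α atTop atTop

/-! Feed the MPC problem the input sequence generated by the stabilizing feedback `κ` itself.
It is feasible, and its cost is the cost of the first `N + M` steps of the `κ`-closed loop,
which Assumption 2 bounds termwise by the geometric sequence `C ρ^k ℓ_min(x)`; summing gives
`γ_{N+M} ℓ_min(x)`. -/

section ClosedLoop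

variable {n m : ℕ} (f : Vec n → Vec m → Vec n) (κ : Vec n → Vec m)

/-- The closed-loop input sequence `φ_u(·, x)`. -/
def phiU (x : Vec n) : ℕ → Vec m := fun k => κ (phiX f κ x k)

theorem traj_phiU (x : Vec n) : traj f x (phiU f κ x) = phiX f κ x := by
  funext k
  induction k with
  | zero => rfl
  | succ k ih => simp only [traj, phiX, phiU, ih]

theorem phiX_phiX (x : Vec n) (N k : ℕ) : phiX f κ (phiX f κ x N) k = phiX f κ x (N + k) := by
  induction k with
  | zero => rfl
  | succ k ih => rw [phiX, ih]; rfl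

theorem feasible_phiU (Z : Set (Vec n × Vec m)) (Uset : Set (Vec m)) (hκU : ∀ x, κ x ∈ Uset)
    (N : ℕ) (x : Vec n) (hZ : ∀ k < N, (phiX f κ x k, κ (phiX f κ x k)) ∈ Z) :
    Feasible f Z Uset N x (phiU f κ x) := fun k hk => by
  rw [traj_phiU]
  exact ⟨hκU _, hZ k hk⟩

theorem Jcost_phiU (ℓ : Vec n → Vec m → ℝ) (hℓ0 : ∀ x u, 0 ≤ ℓ x u)
    (Z : Set (Vec n × Vec m)) (N M : ℕ) (x : Vec n)
    (hZ : ∀ k, N ≤ k → k < N + M → (phiX f κ x k, κ (phiX f κ x k)) ∈ Z) :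
    Jcost f κ ℓ Z N M x (phiU f κ x) =
      ENNReal.ofReal (∑ k ∈ range (N + M), ℓ (phiX f κ x k) (κ (phiX f κ x k))) := by
  have hZtail : ∀ k < M, (phiX f κ x (N + k), κ (phiX f κ x (N + k))) ∈ Z :=
    fun k hk => hZ _ (Nat.le_add_right N k) (by omega)
  simp only [Jcost, Vtail, traj_phiU, phiU, phiX_phiX, if_pos hZtail, sum_range_add]
  exact (ENNReal.ofReal_add (sum_nonneg fun _ _ => hℓ0 _ _)
    (sum_nonneg fun _ _ => hℓ0 _ _)).symm

end ClosedLoop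

theorem sum_range_mul_geom_mul {ρ : ℝ} (hρ : ρ ≠ 1) (C L : ℝ) (K : ℕ) :
    ∑ k ∈ range K, C * ρ ^ k * L = C * (1 - ρ ^ K) / (1 - ρ) * L := by
  rw [← sum_mul, ← mul_sum, geom_sum_eq hρ, ← neg_sub 1 ρ, ← neg_sub 1 (ρ ^ K), neg_div_neg_eq]
  ring

theorem finite_tail_mpc_cost_controllability_general {n m : ℕ}
    (f : Vec n → Vec m → Vec n) (κ : Vec n → Vec m) (ℓ : Vec n → Vec m → ℝ)
    (Z : Set (Vec n × Vec m)) (Uset : Set (Vec m)) (ρ C ε : ℝ)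
    (hℓ0 : ∀ x u, 0 ≤ ℓ x u)
    (hκU : ∀ x, κ x ∈ Uset)
    (hA2 : Assumption2 f κ ℓ Z Uset ρ C ε) :
    ∀ (N M : ℕ) (x : Vec n), lmin ℓ Uset x ≤ ε →
      Vmpc f κ ℓ Z Uset N M x < ⊤ ∧
      Vmpc f κ ℓ Z Uset N M x ≤
        ENNReal.ofReal (C * (1 - ρ ^ (N + M)) / (1 - ρ) * lmin ℓ Uset x) := by
  obtain ⟨⟨-, hρ1⟩, -, -, hdecay⟩ := hA2
  intro N M x hx
  have hfeas := feasible_phiU f κ Z Uset hκU N x fun k _ => (hdecay x hx k).2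
  have hJ : Jcost f κ ℓ Z N M x (phiU f κ x) ≤
      ENNReal.ofReal (C * (1 - ρ ^ (N + M)) / (1 - ρ) * lmin ℓ Uset x) := by
    rw [Jcost_phiU f κ ℓ hℓ0 Z N M x fun k _ _ => (hdecay x hx k).2,
      ← sum_range_mul_geom_mul hρ1.ne]
    exact ENNReal.ofReal_le_ofReal (sum_le_sum fun k _ => (hdecay x hx k).1)
  have hV : Vmpc f κ ℓ Z Uset N M x ≤ _ := (iInf₂_le (phiU f κ x) hfeas).trans hJ
  exact ⟨hV.trans_lt ENNReal.ofReal_lt_top, hV⟩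

/-- Proposition 1: under Assumption 2, for any horizons `N, M ≥ 0` and any
state with `ℓ_min(x) ≤ ε`, the MPC problem is feasible (`V_{N,M}(x) < ∞`) and
`V_{N,M}(x) ≤ γ_{N+M} ℓ_min(x)` with `γ_k = C (1 - ρ^k)/(1 - ρ)`. -/
theorem finite_tail_mpc_cost_controllability {n m : ℕ}
    (f : Vec n → Vec m → Vec n) (κ : Vec n → Vec m) (ℓ : Vec n → Vec m → ℝ)
    (Z : Set (Vec n × Vec m)) (Uset : Set (Vec m)) (ρ C ε : ℝ)
    (hf : Continuous fun p : Vec n × Vec m => f p.1 p.2) (hf0 : f 0 0 = 0)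
    (hℓ : Continuous fun p : Vec n × Vec m => ℓ p.1 p.2) (hℓ0 : ∀ x u, 0 ≤ ℓ x u)
    (hZ0 : ((0 : Vec n), (0 : Vec m)) ∈ interior Z) (hU : IsCompact Uset)
    (hκ : Continuous κ) (hκU : ∀ x, κ x ∈ Uset)
    (hA2 : Assumption2 f κ ℓ Z Uset ρ C ε) :
    ∀ (N M : ℕ) (x : Vec n), lmin ℓ Uset x ≤ ε →
      Vmpc f κ ℓ Z Uset N M x < ⊤ ∧
      Vmpc f κ ℓ Z Uset N M x ≤
        ENNReal.ofReal (C * (1 - ρ ^ (N + M)) / (1 - ρ) * lmin ℓ Uset x) :=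
  finite_tail_mpc_cost_controllability_general f κ ℓ Z Uset ρ C ε hℓ0 hκU hA2
end
end

section
/- Let ρ ∈ (0,1), C > 0, and M ≥ 1. If ℓ_0, …, ℓ_M are nonnegative real numbers satisfying ℓ_M ≤ C ρ^{M−k} ℓ_k for every k ∈ {0, …, M−1}, then ℓ_M ≤ (C ρ^M (1−ρ)/(1−ρ^M)) · Σ_{k=0}^{M−1} ℓ_k. -/
open Finset Filter
open scoped ENNReal

noncomputable section

open scoped Classical

/-! Multiplying the `k`-th constraint by `ρ ^ k` gives `ℓ_M ρ^k ≤ C ρ^M ℓ_k`. Summing over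
`k < M` and using `(1 - ρ) Σ_{k<M} ρ^k = 1 - ρ^M`, which is positive for `M ≥ 1`, gives the
bound. -/

section TailBound

variable {R : Type*} [CommSemiring R] [PartialOrder R] [IsOrderedRing R]

theorem mul_pow_le_mul_pow_of_le_mul_pow_sub {ρ C a b : R} {k M : ℕ} (hρ : 0 ≤ ρ)
    (hkM : k ≤ M) (h : a ≤ C * ρ ^ (M - k) * b) : a * ρ ^ k ≤ C * ρ ^ M * b :=
  calc a * ρ ^ k ≤ C * ρ ^ (M - k) * b * ρ ^ k := mul_le_mul_of_nonneg_right h (pow_nonneg hρ k)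
    _ = C * (ρ ^ (M - k) * ρ ^ k) * b := by ring
    _ = C * ρ ^ M * b := by rw [← pow_add, Nat.sub_add_cancel hkM]

theorem mul_geom_sum_le_of_le_mul_pow_sub {ρ C a : R} {l : ℕ → R} {M : ℕ} (hρ : 0 ≤ ρ)
    (h : ∀ k < M, a ≤ C * ρ ^ (M - k) * l k) :
    a * ∑ k ∈ range M, ρ ^ k ≤ C * ρ ^ M * ∑ k ∈ range M, l k := by
  rw [mul_sum, mul_sum]
  exact sum_le_sum fun k hk ↦
    mul_pow_le_mul_pow_of_le_mul_pow_sub hρ (mem_range.1 hk).le (h k (mem_range.1 hk))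

end TailBound

theorem lp_tail_bound_general (ρ C : ℝ) (hρ : ρ ∈ Set.Ioo (0 : ℝ) 1)
    (M : ℕ) (hM : 1 ≤ M) (l : ℕ → ℝ)
    (hcon : ∀ k < M, l M ≤ C * ρ ^ (M - k) * l k) :
    l M ≤ C * ρ ^ M * (1 - ρ) / (1 - ρ ^ M) * ∑ k ∈ Finset.range M, l k := by
  obtain ⟨hρ0, hρ1⟩ := hρ
  have hgap : 0 < 1 - ρ ^ M := sub_pos.2 (pow_lt_one₀ hρ0.le hρ1 (by omega))
  have hsum := mul_le_mul_of_nonneg_right (mul_geom_sum_le_of_le_mul_pow_sub hρ0.le hcon)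
    (sub_nonneg.2 hρ1.le)
  rw [mul_assoc, geom_sum_mul_neg] at hsum
  rw [div_mul_eq_mul_div, le_div_iff₀ hgap]
  linarith

/-- analytic solution of LP (6): if `ℓ_0, …, ℓ_M ≥ 0` satisfy
`ℓ_M ≤ C ρ^(M-k) ℓ_k` for all `k < M`, then
`ℓ_M ≤ (C ρ^M (1-ρ)/(1-ρ^M)) Σ_{k<M} ℓ_k`. -/
theorem lp_tail_bound (ρ C : ℝ) (hρ : ρ ∈ Set.Ioo (0 : ℝ) 1) (hC : 0 < C)
    (M : ℕ) (hM : 1 ≤ M) (l : ℕ → ℝ) (hl : ∀ k ≤ M, 0 ≤ l k)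
    (hcon : ∀ k < M, l M ≤ C * ρ ^ (M - k) * l k) :
    l M ≤ C * ρ ^ M * (1 - ρ) / (1 - ρ ^ M) * ∑ k ∈ Finset.range M, l k :=
  lp_tail_bound_general ρ C hρ M hM l hcon
end
end

section
/- Under Assumption 2, let M ≥ 1 satisfy C ρ^M < 1 (equivalently M > log(C)/log(1/ρ) when ρ > 0), and set α_M := 1 − C ρ^M > 0. Then for any x ∈ ℝⁿ with ℓ_min(x) ≤ ε, the finite-tail cost is a local relaxed control Lyapunov function: V_{f,M}(f(x, κ(x))) ≤ V_{f,M}(x) − α_M · ℓ_κ(x). -/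
open Finset Filter
open scoped ENNReal

noncomputable section

open scoped Classical

theorem phiX_step_eq_succ {n m : ℕ} (f : Vec n → Vec m → Vec n) (κ : Vec n → Vec m)
    (x : Vec n) : ∀ k, phiX f κ (f x (κ x)) k = phiX f κ x (k + 1)
  | 0 => rfl
  | k + 1 => by rw [phiX, phiX_step_eq_succ f κ x k]; rfl

theorem lmin_le_of_nonneg {n m : ℕ} {ℓ : Vec n → Vec m → ℝ} {Uset : Set (Vec m)}
    {x : Vec n} (hℓ0 : ∀ u, 0 ≤ ℓ x u) {u : Vec m} (hu : u ∈ Uset) :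
    lmin ℓ Uset x ≤ ℓ x u :=
  csInf_le ⟨0, by rintro _ ⟨v, -, rfl⟩; exact hℓ0 v⟩ ⟨u, hu, rfl⟩

theorem Finset.sum_range_succ_comp_add_le {g : ℕ → ℝ} {c : ℝ} (M : ℕ)
    (hgM : g M ≤ c * g 0) :
    ∑ k ∈ range M, g (k + 1) + (1 - c) * g 0 ≤ ∑ k ∈ range M, g k := by
  have h := (sum_range_succ' g M).symm.trans (sum_range_succ g M)
  linarith

section Vtail

variable {n m : ℕ} (f : Vec n → Vec m → Vec n) (κ : Vec n → Vec m)
  (ℓ : Vec n → Vec m → ℝ) (Z : Set (Vec n × Vec m)) (M : ℕ)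

theorem Vtail_of_forall_mem {x : Vec n} (hZ : ∀ k < M, (phiX f κ x k, κ (phiX f κ x k)) ∈ Z) :
    Vtail f κ ℓ Z M x =
      ENNReal.ofReal (∑ k ∈ range M, ℓ (phiX f κ x k) (κ (phiX f κ x k))) :=
  if_pos hZ

theorem Vtail_step_of_forall_mem {x : Vec n}
    (hZ : ∀ k ≤ M, (phiX f κ x k, κ (phiX f κ x k)) ∈ Z) :
    Vtail f κ ℓ Z M (f x (κ x)) =
      ENNReal.ofReal (∑ k ∈ range M, ℓ (phiX f κ x (k + 1)) (κ (phiX f κ x (k + 1)))) := by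
  rw [Vtail_of_forall_mem f κ ℓ Z M fun k hk => by
    simpa only [phiX_step_eq_succ] using hZ (k + 1) hk]
  simp only [phiX_step_eq_succ]

/-- A contraction `ℓ_κ(φ_x(M, x)) ≤ c ℓ_κ(x)` of the stage cost over the horizon is all the
relaxed Lyapunov decrease needs: shifting the tail window by one step swaps `ℓ_κ(x)` for
`ℓ_κ(φ_x(M, x))`. -/
theorem Vtail_step_add_le {x : Vec n} (hℓ0 : ∀ x u, 0 ≤ ℓ x u) {c : ℝ} (hc : c ≤ 1)
    (hZ : ∀ k ≤ M, (phiX f κ x k, κ (phiX f κ x k)) ∈ Z)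
    (hdecay : ℓ (phiX f κ x M) (κ (phiX f κ x M)) ≤ c * ℓ x (κ x)) :
    Vtail f κ ℓ Z M (f x (κ x)) + ENNReal.ofReal ((1 - c) * ℓ x (κ x)) ≤
      Vtail f κ ℓ Z M x := by
  rw [Vtail_step_of_forall_mem f κ ℓ Z M hZ,
    Vtail_of_forall_mem f κ ℓ Z M fun k hk => hZ k hk.le,
    ← ENNReal.ofReal_add (sum_nonneg fun _ _ => hℓ0 _ _)
      (mul_nonneg (sub_nonneg.2 hc) (hℓ0 _ _))]
  exact ENNReal.ofReal_le_ofReal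
    (sum_range_succ_comp_add_le (g := fun k => ℓ (phiX f κ x k) (κ (phiX f κ x k))) M hdecay)

end Vtail

theorem finite_tail_cost_relaxed_CLF_general {n m : ℕ}
    (f : Vec n → Vec m → Vec n) (κ : Vec n → Vec m) (ℓ : Vec n → Vec m → ℝ)
    (Z : Set (Vec n × Vec m)) (Uset : Set (Vec m)) (ρ C ε : ℝ)
    (hℓ0 : ∀ x u, 0 ≤ ℓ x u)
    (hκU : ∀ x, κ x ∈ Uset)
    (hA2 : Assumption2 f κ ℓ Z Uset ρ C ε)
    (M : ℕ) (hCρ : C * ρ ^ M < 1) :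
    ∀ x : Vec n, lmin ℓ Uset x ≤ ε →
      Vtail f κ ℓ Z M (f x (κ x)) + ENNReal.ofReal ((1 - C * ρ ^ M) * ℓ x (κ x)) ≤
        Vtail f κ ℓ Z M x := by
  intro x hx
  obtain ⟨hρ, hC, -, hA2⟩ := hA2
  have hdecay : ℓ (phiX f κ x M) (κ (phiX f κ x M)) ≤ C * ρ ^ M * ℓ x (κ x) :=
    (hA2 x hx M).1.trans <| mul_le_mul_of_nonneg_left (lmin_le_of_nonneg (hℓ0 x) (hκU x))
      (mul_nonneg (zero_le_one.trans hC) (pow_nonneg hρ.1 M))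
  exact Vtail_step_add_le f κ ℓ Z M hℓ0 hCρ.le (fun k _ => (hA2 x hx k).2) hdecay

/-- under Assumption 2, if `M ≥ 1` with `C ρ^M < 1` and `α_M := 1 - C ρ^M`,
then for any `x` with `ℓ_min(x) ≤ ε` the finite-tail cost is a local relaxed CLF:
`V_{f,M}(f(x, κ(x))) ≤ V_{f,M}(x) - α_M ℓ_κ(x)`. -/
theorem finite_tail_cost_relaxed_CLF {n m : ℕ}
    (f : Vec n → Vec m → Vec n) (κ : Vec n → Vec m) (ℓ : Vec n → Vec m → ℝ)
    (Z : Set (Vec n × Vec m)) (Uset : Set (Vec m)) (ρ C ε : ℝ)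
    (hf : Continuous fun p : Vec n × Vec m => f p.1 p.2)
    (hℓ : Continuous fun p : Vec n × Vec m => ℓ p.1 p.2) (hℓ0 : ∀ x u, 0 ≤ ℓ x u)
    (hU : IsCompact Uset) (hκ : Continuous κ) (hκU : ∀ x, κ x ∈ Uset)
    (hA2 : Assumption2 f κ ℓ Z Uset ρ C ε)
    (M : ℕ) (hM : 1 ≤ M) (hCρ : C * ρ ^ M < 1) :
    ∀ x : Vec n, lmin ℓ Uset x ≤ ε →
      Vtail f κ ℓ Z M (f x (κ x)) + ENNReal.ofReal ((1 - C * ρ ^ M) * ℓ x (κ x)) ≤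
        Vtail f κ ℓ Z M x :=
  finite_tail_cost_relaxed_CLF_general f κ ℓ Z Uset ρ C ε hℓ0 hκU hA2 M hCρ
end
end

section
/- Under Assumption 2, let V̄ > 0, γ := C/(1−ρ), and N₀ := ⌈max{0, (V̄ − γε)/ε}⌉. For any N ≥ N₀, M ≥ 0 and any x ∈ ℝⁿ with V_{N,M}(x) ≤ V̄, if u*(·) is a minimizing input sequence for V_{N,M}(x) with state trajectory x*(·), then there exists an index k ∈ {0, …, N₀} such that V_{N−k,M}(x*(k)) ≤ γ ε. -/
open Finset Filter
open scoped ENNReal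

noncomputable section

open scoped Classical

/-! Either the optimal trajectory enters the region `ℓ_min ≤ ε` within `N₀` steps, and from there
the local controller `κ` achieves cost at most `γ ε`; or each of its first `N₀` stage costs exceeds
`ε`, and by the principle of optimality the remaining problem from `x*(N₀)` costs at most
`V̄ - N₀ ε ≤ γ ε`. -/

theorem sum_range_le_div_one_sub_mul {a : ℕ → ℝ} {ρ C L : ℝ} (hρ0 : 0 ≤ ρ) (hρ1 : ρ < 1)
    (hC : 0 ≤ C) (hL : 0 ≤ L) (ha : ∀ k, a k ≤ C * ρ ^ k * L) (K : ℕ) :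
    ∑ k ∈ range K, a k ≤ C / (1 - ρ) * L :=
  calc ∑ k ∈ range K, a k ≤ ∑ k ∈ range K, C * ρ ^ k * L := sum_le_sum fun k _ => ha k
    _ = C * L * ∑ k ∈ Ico 0 K, ρ ^ k := by rw [mul_sum, range_eq_Ico]; ring_nf
    _ ≤ C * L * (ρ ^ 0 / (1 - ρ)) :=
        mul_le_mul_of_nonneg_left (geom_sum_Ico_le_of_lt_one hρ0 hρ1) (mul_nonneg hC hL)
    _ = C / (1 - ρ) * L := by ring

section

variable {n m : ℕ} {f : Vec n → Vec m → Vec n} {κ : Vec n → Vec m} {ℓ : Vec n → Vec m → ℝ}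
  {Z : Set (Vec n × Vec m)} {Uset : Set (Vec m)}

theorem traj_add (x : Vec n) (u : ℕ → Vec m) (a b : ℕ) :
    traj f (traj f x u a) (fun j => u (a + j)) b = traj f x u (a + b) := by
  induction b with
  | zero => rfl
  | succ b ih => rw [traj, ih]; rfl

theorem phiX_add (x : Vec n) (a b : ℕ) : phiX f κ (phiX f κ x a) b = phiX f κ x (a + b) := by
  induction b with
  | zero => rfl
  | succ b ih => rw [phiX, ih]; rfl

theorem traj_closedLoop (x : Vec n) : traj f x (fun k => κ (phiX f κ x k)) = phiX f κ x := by
  funext k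
  induction k with
  | zero => rfl
  | succ k ih => rw [traj, ih]; rfl

theorem lmin_nonneg (hℓ0 : ∀ x u, 0 ≤ ℓ x u) (x : Vec n) : 0 ≤ lmin ℓ Uset x :=
  Real.sInf_nonneg (by rintro _ ⟨u, -, rfl⟩; exact hℓ0 x u)

theorem lmin_le (hℓ0 : ∀ x u, 0 ≤ ℓ x u) (x : Vec n) {u : Vec m} (hu : u ∈ Uset) :
    lmin ℓ Uset x ≤ ℓ x u :=
  csInf_le ⟨0, by rintro _ ⟨v, -, rfl⟩; exact hℓ0 x v⟩ ⟨u, hu, rfl⟩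

theorem Feasible.shift {N : ℕ} {x : Vec n} {u : ℕ → Vec m} (hu : Feasible f Z Uset N x u)
    (a : ℕ) : Feasible f Z Uset (N - a) (traj f x u a) (fun j => u (a + j)) := by
  intro k hk
  rw [traj_add]
  exact hu (a + k) (by omega)

theorem Vmpc_le_Jcost {N M : ℕ} {x : Vec n} {u : ℕ → Vec m} (hu : Feasible f Z Uset N x u) :
    Vmpc f κ ℓ Z Uset N M x ≤ Jcost f κ ℓ Z N M x u :=
  iInf₂_le u hu

theorem Jcost_eq_ofReal_sum_add_Jcost_shift (hℓ0 : ∀ x u, 0 ≤ ℓ x u) {a N : ℕ} (ha : a ≤ N)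
    (M : ℕ) (x : Vec n) (u : ℕ → Vec m) :
    Jcost f κ ℓ Z N M x u = ENNReal.ofReal (∑ k ∈ range a, ℓ (traj f x u k) (u k)) +
      Jcost f κ ℓ Z (N - a) M (traj f x u a) (fun j => u (a + j)) := by
  obtain ⟨b, rfl⟩ := Nat.exists_eq_add_of_le ha
  simp only [Jcost, Nat.add_sub_cancel_left, traj_add, sum_range_add]
  rw [ENNReal.ofReal_add (sum_nonneg fun _ _ => hℓ0 _ _) (sum_nonneg fun _ _ => hℓ0 _ _),
    add_assoc]

/-- One half of Bellman's principle of optimality. -/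
theorem ofReal_sum_add_Vmpc_le_Jcost (hℓ0 : ∀ x u, 0 ≤ ℓ x u) {a N : ℕ} (ha : a ≤ N)
    (M : ℕ) {x : Vec n} {u : ℕ → Vec m} (hu : Feasible f Z Uset N x u) :
    ENNReal.ofReal (∑ k ∈ range a, ℓ (traj f x u k) (u k)) +
      Vmpc f κ ℓ Z Uset (N - a) M (traj f x u a) ≤ Jcost f κ ℓ Z N M x u := by
  rw [Jcost_eq_ofReal_sum_add_Jcost_shift hℓ0 ha]
  gcongr
  exact Vmpc_le_Jcost (hu.shift a)

theorem Jcost_closedLoop (hℓ0 : ∀ x u, 0 ≤ ℓ x u) {N M : ℕ} {x : Vec n}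
    (hZ : ∀ k, (phiX f κ x k, κ (phiX f κ x k)) ∈ Z) :
    Jcost f κ ℓ Z N M x (fun k => κ (phiX f κ x k)) =
      ENNReal.ofReal (∑ k ∈ range (N + M), ℓ (phiX f κ x k) (κ (phiX f κ x k))) := by
  have hVtail : Vtail f κ ℓ Z M (phiX f κ x N) =
      ENNReal.ofReal (∑ j ∈ range M, ℓ (phiX f κ x (N + j)) (κ (phiX f κ x (N + j)))) := by
    rw [Vtail, if_pos fun k _ => phiX_add x N k ▸ hZ (N + k)]
    simp only [phiX_add]
  rw [Jcost, traj_closedLoop, hVtail, sum_range_add,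
    ENNReal.ofReal_add (sum_nonneg fun _ _ => hℓ0 _ _) (sum_nonneg fun _ _ => hℓ0 _ _)]

/-- Within the region `ℓ_min ≤ ε`, following the local controller `κ` is a feasible candidate
whose cost is a geometric series. -/
theorem Vmpc_le_of_lmin_le (hℓ0 : ∀ x u, 0 ≤ ℓ x u) (hκU : ∀ x, κ x ∈ Uset) {ρ C ε : ℝ}
    (hA2 : Assumption2 f κ ℓ Z Uset ρ C ε) (N M : ℕ) {x : Vec n} (hx : lmin ℓ Uset x ≤ ε) :
    Vmpc f κ ℓ Z Uset N M x ≤ ENNReal.ofReal (C / (1 - ρ) * ε) := by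
  obtain ⟨⟨hρ0, hρ1⟩, hC, -, hdecay⟩ := hA2
  have hfeas : Feasible f Z Uset N x (fun k => κ (phiX f κ x k)) := fun k _ =>
    ⟨hκU _, congrFun (traj_closedLoop x) k ▸ (hdecay x hx k).2⟩
  calc Vmpc f κ ℓ Z Uset N M x ≤ Jcost f κ ℓ Z N M x (fun k => κ (phiX f κ x k)) :=
        Vmpc_le_Jcost hfeas
    _ = ENNReal.ofReal (∑ k ∈ range (N + M), ℓ (phiX f κ x k) (κ (phiX f κ x k))) :=
        Jcost_closedLoop hℓ0 fun k => (hdecay x hx k).2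
    _ ≤ ENNReal.ofReal (C / (1 - ρ) * lmin ℓ Uset x) :=
        ENNReal.ofReal_le_ofReal <| sum_range_le_div_one_sub_mul hρ0 hρ1 (by linarith)
          (lmin_nonneg hℓ0 x) (fun k => (hdecay x hx k).1) _
    _ ≤ ENNReal.ofReal (C / (1 - ρ) * ε) :=
        ENNReal.ofReal_le_ofReal <| by gcongr

end

theorem reach_small_value_sublevel_general {n m : ℕ}
    (f : Vec n → Vec m → Vec n) (κ : Vec n → Vec m) (ℓ : Vec n → Vec m → ℝ)
    (Z : Set (Vec n × Vec m)) (Uset : Set (Vec m)) (ρ C ε : ℝ)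
    (hℓ0 : ∀ x u, 0 ≤ ℓ x u)
    (hκU : ∀ x, κ x ∈ Uset)
    (hA2 : Assumption2 f κ ℓ Z Uset ρ C ε)
    (Vbar γ : ℝ) (hγ : γ = C / (1 - ρ))
    (N₀ : ℕ) (hN₀ : N₀ = ⌈max 0 ((Vbar - γ * ε) / ε)⌉₊)
    (N M : ℕ) (hN : N₀ ≤ N) (x : Vec n)
    (hx : Vmpc f κ ℓ Z Uset N M x ≤ ENNReal.ofReal Vbar)
    (u : ℕ → Vec m) (hu : IsMinimizer f κ ℓ Z Uset N M x u) :
    ∃ k ≤ N₀, Vmpc f κ ℓ Z Uset (N - k) M (traj f x u k) ≤ ENNReal.ofReal (γ * ε) := by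
  by_cases hreach : ∃ k ≤ N₀, lmin ℓ Uset (traj f x u k) ≤ ε
  · obtain ⟨k, hk, hsmall⟩ := hreach
    exact ⟨k, hk, hγ ▸ Vmpc_le_of_lmin_le hℓ0 hκU hA2 _ M hsmall⟩
  push Not at hreach
  obtain ⟨⟨-, hρ1⟩, hC, hε, -⟩ := hA2
  set S := ∑ k ∈ range N₀, ℓ (traj f x u k) (u k)
  have hS : N₀ * ε ≤ S := by
    simpa using card_nsmul_le_sum (range N₀) _ ε fun k hk =>
      (hreach k (mem_range.mp hk).le).le.trans
        (lmin_le hℓ0 _ (hu.1 k ((mem_range.mp hk).trans_le hN)).1)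
  have hN₀ε : Vbar - γ * ε ≤ N₀ * ε :=
    (div_le_iff₀ hε).mp <| (le_max_right _ _).trans (hN₀ ▸ Nat.le_ceil _)
  have hγε : 0 ≤ γ * ε := mul_nonneg (hγ ▸ div_nonneg (by linarith) (by linarith)) hε.le
  have hbudget : ENNReal.ofReal S + Vmpc f κ ℓ Z Uset (N - N₀) M (traj f x u N₀) ≤
      ENNReal.ofReal S + ENNReal.ofReal (γ * ε) := calc
    _ ≤ Jcost f κ ℓ Z N M x u := ofReal_sum_add_Vmpc_le_Jcost hℓ0 hN M hu.1
    _ = Vmpc f κ ℓ Z Uset N M x := hu.2.symm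
    _ ≤ ENNReal.ofReal (S + γ * ε) := hx.trans (ENNReal.ofReal_le_ofReal (by linarith))
    _ = ENNReal.ofReal S + ENNReal.ofReal (γ * ε) :=
        ENNReal.ofReal_add (sum_nonneg fun _ _ => hℓ0 _ _) hγε
  exact ⟨N₀, le_rfl, (ENNReal.add_le_add_iff_left ENNReal.ofReal_ne_top).mp hbudget⟩

/-- Theorem 1, Part II, first step: under Assumption 2, with
`γ = C/(1-ρ)` and `N₀ = ⌈max {0, (V̄ - γε)/ε}⌉`, for `N ≥ N₀` and any `x` with
`V_{N,M}(x) ≤ V̄`, along any minimizing sequence there is `k ∈ {0,…,N₀}` with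
`V_{N-k,M}(x*(k)) ≤ γ ε`. -/
theorem reach_small_value_sublevel {n m : ℕ}
    (f : Vec n → Vec m → Vec n) (κ : Vec n → Vec m) (ℓ : Vec n → Vec m → ℝ)
    (Z : Set (Vec n × Vec m)) (Uset : Set (Vec m)) (ρ C ε : ℝ)
    (hf : Continuous fun p : Vec n × Vec m => f p.1 p.2)
    (hℓ : Continuous fun p : Vec n × Vec m => ℓ p.1 p.2) (hℓ0 : ∀ x u, 0 ≤ ℓ x u)
    (hU : IsCompact Uset) (hκ : Continuous κ) (hκU : ∀ x, κ x ∈ Uset)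
    (hA2 : Assumption2 f κ ℓ Z Uset ρ C ε)
    (Vbar γ : ℝ) (hVbar : 0 < Vbar) (hγ : γ = C / (1 - ρ))
    (N₀ : ℕ) (hN₀ : N₀ = ⌈max 0 ((Vbar - γ * ε) / ε)⌉₊)
    (N M : ℕ) (hN : N₀ ≤ N) (x : Vec n)
    (hx : Vmpc f κ ℓ Z Uset N M x ≤ ENNReal.ofReal Vbar)
    (u : ℕ → Vec m) (hu : IsMinimizer f κ ℓ Z Uset N M x u) :
    ∃ k ≤ N₀, Vmpc f κ ℓ Z Uset (N - k) M (traj f x u k) ≤ ENNReal.ofReal (γ * ε) :=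
  reach_small_value_sublevel_general f κ ℓ Z Uset ρ C ε hℓ0 hκU hA2 Vbar γ hγ N₀ hN₀ N M hN x hx u
    hu
end
end
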